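/- Let μ : (0,∞) → ℝ be twice continuously differentiable, φ : (0,∞) → ℝ with φ'(s) = μ(s)/s² for all s > 0, and γ > 1. Let Ω ⊆ ℝ² be open and ρ, u : Ω → ℝ twice continuously differentiable with ρ > 0 on Ω, satisfying ∂_t ρ + ∂_x(ρu) = 0 and ∂_t(ρu) + ∂_x(ρu²) − ∂_x(μ(ρ)∂_x u) + ∂_x(ρ^γ) = 0 on Ω. Set v = u + φ'(ρ)∂_x ρ. Then the local BD-entropy identity holds on Ω: ∂_t( (1/2)ρv² + ρ^γ/(γ−1) ) + ∂_x( (1/2)ρ u v² + (γ/(γ−1))ρ^γ u ) + γ ρ^{γ−1} φ'(ρ) (∂_x ρ)² = 0. -/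

import Mathlib

open Real Set

/-- Partial derivative with respect to the first variable (time). -/
noncomputable def pdt (f : ℝ × ℝ → ℝ) (z : ℝ × ℝ) : ℝ := deriv (fun s => f (s, z.2)) z.1

/-- Partial derivative with respect to the second variable (space). -/
noncomputable def pdx (f : ℝ × ℝ → ℝ) (z : ℝ × ℝ) : ℝ := deriv (fun y => f (z.1, y)) z.2

/-!
The effective velocity `v = u + φ'(ρ) ∂ₓρ` is transported by the flow up to the pressure force,
`ρ (∂ₜv + u ∂ₓv) + ∂ₓ(ρ^γ) = 0`: expanding with the momentum equation and the `x`-derivative of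
the mass equation, the viscous terms cancel exactly because `φ'(ρ) = μ(ρ)/ρ²`. On the other hand,
for `E = ½ρv² + ρ^γ/(γ-1)` and its flux `F = ½ρuv² + γ/(γ-1) ρ^γ u`, the mass equation turns
`∂ₜE + ∂ₓF` into `ρ v (∂ₜ + u∂ₓ)v + u ∂ₓ(ρ^γ)`, which by transport is
`(u - v) ∂ₓ(ρ^γ) = -φ'(ρ) ∂ₓρ ∂ₓ(ρ^γ)` and cancels the dissipation term.
-/

open Filter Topology

section PartialDerivatives

variable {f g : ℝ × ℝ → ℝ} {z : ℝ × ℝ}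

theorem DifferentiableAt.hasDerivAt_pdt (hf : DifferentiableAt ℝ f z) :
    HasDerivAt (fun s => f (s, z.2)) (pdt f z) z.1 :=
  (hf.comp z.1 (differentiableAt_id.prodMk (differentiableAt_const z.2))).hasDerivAt

theorem DifferentiableAt.hasDerivAt_pdx (hf : DifferentiableAt ℝ f z) :
    HasDerivAt (fun y => f (z.1, y)) (pdx f z) z.2 :=
  (hf.comp z.2 ((differentiableAt_const z.1).prodMk differentiableAt_id)).hasDerivAt

theorem pdt_eq_fderiv (hf : DifferentiableAt ℝ f z) : pdt f z = fderiv ℝ f z (1, 0) :=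
  (hf.hasFDerivAt.comp_hasDerivAt z.1
    ((hasDerivAt_id z.1).prodMk (hasDerivAt_const z.1 z.2))).deriv

theorem pdx_eq_fderiv (hf : DifferentiableAt ℝ f z) : pdx f z = fderiv ℝ f z (0, 1) :=
  (hf.hasFDerivAt.comp_hasDerivAt z.2
    ((hasDerivAt_const z.2 z.1).prodMk (hasDerivAt_id z.2))).deriv

theorem Filter.EventuallyEq.pdt_eq (h : f =ᶠ[𝓝 z] g) : pdt f z = pdt g z :=
  Filter.EventuallyEq.deriv_eq <|
    (continuous_id.prodMk continuous_const).continuousAt.tendsto.eventually h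

theorem Filter.EventuallyEq.pdx_eq (h : f =ᶠ[𝓝 z] g) : pdx f z = pdx g z :=
  Filter.EventuallyEq.deriv_eq <|
    (continuous_const.prodMk continuous_id).continuousAt.tendsto.eventually h

theorem pdt_mul (hf : DifferentiableAt ℝ f z) (hg : DifferentiableAt ℝ g z) :
    pdt (fun q => f q * g q) z = pdt f z * g z + f z * pdt g z :=
  (hf.hasDerivAt_pdt.mul hg.hasDerivAt_pdt).deriv

theorem pdx_mul (hf : DifferentiableAt ℝ f z) (hg : DifferentiableAt ℝ g z) :
    pdx (fun q => f q * g q) z = pdx f z * g z + f z * pdx g z :=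
  (hf.hasDerivAt_pdx.mul hg.hasDerivAt_pdx).deriv

theorem pdx_rpow_const {p : ℝ} (hf : DifferentiableAt ℝ f z) (hfz : f z ≠ 0 ∨ 1 ≤ p) :
    pdx (fun q => f q ^ p) z = pdx f z * p * f z ^ (p - 1) :=
  (hf.hasDerivAt_pdx.rpow_const hfz).deriv

theorem pdt_eventuallyEq_fderiv (hf : ∀ᶠ q in 𝓝 z, DifferentiableAt ℝ f q) :
    pdt f =ᶠ[𝓝 z] fun q => fderiv ℝ f q (1, 0) :=
  hf.mono fun _ => pdt_eq_fderiv

theorem pdx_eventuallyEq_fderiv (hf : ∀ᶠ q in 𝓝 z, DifferentiableAt ℝ f q) :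
    pdx f =ᶠ[𝓝 z] fun q => fderiv ℝ f q (0, 1) :=
  hf.mono fun _ => pdx_eq_fderiv

theorem ContDiffAt.eventually_differentiableAt {n : WithTop ℕ∞} (hf : ContDiffAt ℝ n f z)
    (hn : 1 ≤ n) : ∀ᶠ q in 𝓝 z, DifferentiableAt ℝ f q :=
  ((hf.of_le hn).eventually (by simp)).mono fun _ hq => hq.differentiableAt one_ne_zero

theorem ContDiffAt.contDiffAt_pdt {n : WithTop ℕ∞} (hf : ContDiffAt ℝ (n + 1) f z) :
    ContDiffAt ℝ n (pdt f) z :=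
  ((hf.fderiv_right le_rfl).clm_apply contDiffAt_const).congr_of_eventuallyEq
    (pdt_eventuallyEq_fderiv (hf.eventually_differentiableAt le_add_self))

theorem ContDiffAt.contDiffAt_pdx {n : WithTop ℕ∞} (hf : ContDiffAt ℝ (n + 1) f z) :
    ContDiffAt ℝ n (pdx f) z :=
  ((hf.fderiv_right le_rfl).clm_apply contDiffAt_const).congr_of_eventuallyEq
    (pdx_eventuallyEq_fderiv (hf.eventually_differentiableAt le_add_self))

theorem ContDiffAt.pdt_pdx_comm (hf : ContDiffAt ℝ 2 f z) : pdt (pdx f) z = pdx (pdt f) z := by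
  have hf' := hf.eventually_differentiableAt (by norm_num)
  have hd : DifferentiableAt ℝ (fderiv ℝ f) z :=
    (hf.fderiv_right (m := 1) (by norm_num)).differentiableAt one_ne_zero
  have hdir (e : ℝ × ℝ) : DifferentiableAt ℝ (fun q => fderiv ℝ f q e) z :=
    hd.clm_apply (differentiableAt_const e)
  have hsnd (e e' : ℝ × ℝ) :
      fderiv ℝ (fun q => fderiv ℝ f q e) z e' = fderiv ℝ (fderiv ℝ f) z e' e := by
    rw [fderiv_clm_apply hd (differentiableAt_const e)]
    simp
  rw [(pdx_eventuallyEq_fderiv hf').pdt_eq, (pdt_eventuallyEq_fderiv hf').pdx_eq,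
    pdt_eq_fderiv (hdir _), pdx_eq_fderiv (hdir _), hsnd, hsnd]
  exact hf.isSymmSndFDerivAt (by simp) _ _

end PartialDerivatives

theorem energy_balance {ρ u w : ℝ × ℝ → ℝ} {z : ℝ × ℝ} {γ : ℝ} (hγ : γ ≠ 1)
    (hρ : DifferentiableAt ℝ ρ z) (hu : DifferentiableAt ℝ u z) (hw : DifferentiableAt ℝ w z)
    (hρz : 0 < ρ z) (hmass : pdt ρ z + pdx (fun q => ρ q * u q) z = 0) :
    pdt (fun q => 1 / 2 * ρ q * w q ^ 2 + ρ q ^ γ / (γ - 1)) z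
      + pdx (fun q => 1 / 2 * ρ q * u q * w q ^ 2 + γ / (γ - 1) * ρ q ^ γ * u q) z
      = ρ z * w z * (pdt w z + u z * pdx w z) + u z * pdx (fun q => ρ q ^ γ) z := by
  have hρt := hρ.hasDerivAt_pdt
  have hρx := hρ.hasDerivAt_pdx
  have hux := hu.hasDerivAt_pdx
  rw [pdx_mul hρ hu] at hmass
  rw [pdx_rpow_const hρ (.inl hρz.ne'),
    pdt, (((hρt.const_mul (1 / 2)).fun_mul (hw.hasDerivAt_pdt.fun_pow 2)).fun_add
      ((hρt.rpow_const (p := γ) (.inl hρz.ne')).div_const (γ - 1))).deriv,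
    pdx, ((((hρx.const_mul (1 / 2)).fun_mul hux).fun_mul (hw.hasDerivAt_pdx.fun_pow 2)).fun_add
      (((hρx.rpow_const (p := γ) (.inl hρz.ne')).const_mul (γ / (γ - 1))).fun_mul hux)).deriv,
    rpow_sub_one hρz.ne']
  have hγ' : γ - 1 ≠ 0 := sub_ne_zero.mpr hγ
  field_simp
  linear_combination (ρ z * (γ - 1) * w z ^ 2 + 2 * γ * ρ z ^ γ) * hmass

theorem pdx_pdt_add_eq_zero_of_continuity {ρ u : ℝ × ℝ → ℝ} {z : ℝ × ℝ}
    (hρ : ContDiffAt ℝ 2 ρ z) (hu : ContDiffAt ℝ 2 u z)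
    (hmass : ∀ᶠ q in 𝓝 z, pdt ρ q + pdx (fun q => ρ q * u q) q = 0) :
    pdx (pdt ρ) z
      + (pdx (pdx ρ) z * u z + 2 * pdx ρ z * pdx u z + ρ z * pdx (pdx u) z) = 0 := by
  have hρev := hρ.eventually_differentiableAt (by norm_num)
  have huev := hu.eventually_differentiableAt (by norm_num)
  have hmass' : (fun q => pdt ρ q + (pdx ρ q * u q + ρ q * pdx u q)) =ᶠ[𝓝 z] fun _ => 0 := by
    filter_upwards [hmass, hρev, huev] with q hq hρq huq
    rwa [pdx_mul hρq huq] at hq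
  have hρt := (hρ.contDiffAt_pdt (n := 1)).differentiableAt one_ne_zero
  have hρx := (hρ.contDiffAt_pdx (n := 1)).differentiableAt one_ne_zero
  have hux := (hu.contDiffAt_pdx (n := 1)).differentiableAt one_ne_zero
  have key := (hρt.hasDerivAt_pdx.fun_add
    ((hρx.hasDerivAt_pdx.fun_mul huev.self_of_nhds.hasDerivAt_pdx).fun_add
      (hρev.self_of_nhds.hasDerivAt_pdx.fun_mul hux.hasDerivAt_pdx))).deriv.symm.trans
    (hmass'.pdx_eq.trans (deriv_const _ _))
  linear_combination key

-- `μ(ρ)/ρ²` stands for `φ'(ρ)`: this is the paper's `v` wherever `ρ > 0`.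
noncomputable def effectiveVelocity (μ : ℝ → ℝ) (ρ u : ℝ × ℝ → ℝ) (q : ℝ × ℝ) : ℝ :=
  u q + μ (ρ q) / ρ q ^ 2 * pdx ρ q

section EffectiveVelocity

variable {μ : ℝ → ℝ} {ρ u p : ℝ × ℝ → ℝ} {z : ℝ × ℝ}

theorem hasDerivAt_div_sq {x : ℝ} (hμ : DifferentiableAt ℝ μ x) (hx : x ≠ 0) :
    HasDerivAt (fun s => μ s / s ^ 2) (deriv μ x / x ^ 2 - 2 * μ x / x ^ 3) x := by
  refine (hμ.hasDerivAt.fun_div (hasDerivAt_pow 2 x) (pow_ne_zero 2 hx)).congr_deriv ?_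
  field_simp
  ring

theorem differentiableAt_effectiveVelocity (hμ : DifferentiableAt ℝ μ (ρ z))
    (hρ : ContDiffAt ℝ 2 ρ z) (hu : DifferentiableAt ℝ u z) (hρz : ρ z ≠ 0) :
    DifferentiableAt ℝ (effectiveVelocity μ ρ u) z :=
  hu.add (((hasDerivAt_div_sq hμ hρz).differentiableAt.comp z
    (hρ.differentiableAt two_ne_zero)).mul
    ((hρ.contDiffAt_pdx (n := 1)).differentiableAt one_ne_zero))

theorem effectiveVelocity_transport (hμ : DifferentiableAt ℝ μ (ρ z))
    (hρ : ContDiffAt ℝ 2 ρ z) (hu : ContDiffAt ℝ 2 u z) (hρz : ρ z ≠ 0)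
    (hmass : ∀ᶠ q in 𝓝 z, pdt ρ q + pdx (fun q => ρ q * u q) q = 0)
    (hmom : pdt (fun q => ρ q * u q) z + pdx (fun q => ρ q * u q ^ 2) z
      - pdx (fun q => μ (ρ q) * pdx u q) z + pdx p z = 0) :
    ρ z * (pdt (effectiveVelocity μ ρ u) z + u z * pdx (effectiveVelocity μ ρ u) z)
      + pdx p z = 0 := by
  have hρ1 := hρ.differentiableAt two_ne_zero
  have hu1 := hu.differentiableAt two_ne_zero
  have hρx := (hρ.contDiffAt_pdx (n := 1)).differentiableAt one_ne_zero
  have hux := (hu.contDiffAt_pdx (n := 1)).differentiableAt one_ne_zero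
  have hψ := hasDerivAt_div_sq hμ hρz
  have hwt : pdt (effectiveVelocity μ ρ u) z = pdt u z + ((deriv μ (ρ z) / ρ z ^ 2
      - 2 * μ (ρ z) / ρ z ^ 3) * pdt ρ z * pdx ρ z + μ (ρ z) / ρ z ^ 2 * pdt (pdx ρ) z) :=
    (hu1.hasDerivAt_pdt.fun_add ((hψ.comp_of_eq z.1 hρ1.hasDerivAt_pdt rfl).fun_mul
      hρx.hasDerivAt_pdt)).deriv
  have hwx : pdx (effectiveVelocity μ ρ u) z = pdx u z + ((deriv μ (ρ z) / ρ z ^ 2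
      - 2 * μ (ρ z) / ρ z ^ 3) * pdx ρ z * pdx ρ z + μ (ρ z) / ρ z ^ 2 * pdx (pdx ρ) z) :=
    (hu1.hasDerivAt_pdx.fun_add ((hψ.comp_of_eq z.2 hρ1.hasDerivAt_pdx rfl).fun_mul
      hρx.hasDerivAt_pdx)).deriv
  have hmass_z := hmass.self_of_nhds
  rw [pdx_mul hρ1 hu1] at hmass_z
  have hmass_x := pdx_pdt_add_eq_zero_of_continuity hρ hu hmass
  have hmom_flux :
      pdx (fun q => ρ q * u q ^ 2) z = pdx ρ z * u z ^ 2 + 2 * ρ z * u z * pdx u z :=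
    (hρ1.hasDerivAt_pdx.fun_mul (hu1.hasDerivAt_pdx.fun_pow 2)).deriv.trans (by ring)
  have hvisc : pdx (fun q => μ (ρ q) * pdx u q) z
      = deriv μ (ρ z) * pdx ρ z * pdx u z + μ (ρ z) * pdx (pdx u) z :=
    ((hμ.hasDerivAt.comp_of_eq z.2 hρ1.hasDerivAt_pdx rfl).fun_mul hux.hasDerivAt_pdx).deriv
  rw [pdt_mul hρ1 hu1, hmom_flux, hvisc] at hmom
  rw [hwt, hwx, hρ.pdt_pdx_comm]
  field_simp
  linear_combination ρ z ^ 2 * hmom + ρ z * μ (ρ z) * hmass_x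
    + ((ρ z * deriv μ (ρ z) - 2 * μ (ρ z)) * pdx ρ z - ρ z ^ 2 * u z) * hmass_z

end EffectiveVelocity

theorem stmt_4 (μ φ : ℝ → ℝ) (γ : ℝ) (Ω : Set (ℝ × ℝ)) (ρ u v : ℝ × ℝ → ℝ)
    (hμ : ContDiffOn ℝ 2 μ (Set.Ioi 0))
    (hφ : ∀ s : ℝ, 0 < s → HasDerivAt φ (μ s / s ^ 2) s)
    (hγ : 1 < γ) (hΩ : IsOpen Ω)
    (hρC : ContDiffOn ℝ 2 ρ Ω) (huC : ContDiffOn ℝ 2 u Ω)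
    (hρpos : ∀ z ∈ Ω, 0 < ρ z)
    (hmass : ∀ z ∈ Ω, pdt ρ z + pdx (fun q => ρ q * u q) z = 0)
    (hmom : ∀ z ∈ Ω,
      pdt (fun q => ρ q * u q) z + pdx (fun q => ρ q * u q ^ 2) z
        - pdx (fun q => μ (ρ q) * pdx u q) z + pdx (fun q => ρ q ^ γ) z = 0)
    (hv : ∀ q, v q = u q + deriv φ (ρ q) * pdx ρ q) :
    ∀ z ∈ Ω,
      pdt (fun q => (1 / 2) * ρ q * v q ^ 2 + ρ q ^ γ / (γ - 1)) z
        + pdx (fun q => (1 / 2) * ρ q * u q * v q ^ 2 + (γ / (γ - 1)) * ρ q ^ γ * u q) z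
        + γ * ρ z ^ (γ - 1) * deriv φ (ρ z) * (pdx ρ z) ^ 2 = 0 := by
  intro z hz
  have hΩz : Ω ∈ 𝓝 z := hΩ.mem_nhds hz
  have hρ := hρC.contDiffAt hΩz
  have hu := huC.contDiffAt hΩz
  have hρ1 := hρ.differentiableAt two_ne_zero
  have hu1 := hu.differentiableAt two_ne_zero
  have hρz := hρpos z hz
  have hμz : DifferentiableAt ℝ μ (ρ z) :=
    (hμ.contDiffAt (Ioi_mem_nhds hρz)).differentiableAt two_ne_zero
  have hvw : v =ᶠ[𝓝 z] effectiveVelocity μ ρ u := by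
    filter_upwards [hΩz] with q hq
    rw [hv, (hφ _ (hρpos q hq)).deriv, effectiveVelocity]
  have hv1 : DifferentiableAt ℝ v z :=
    (differentiableAt_effectiveVelocity hμz hρ hu1 hρz.ne').congr_of_eventuallyEq hvw
  have htransport := effectiveVelocity_transport hμz hρ hu hρz.ne'
    (eventually_of_mem hΩz hmass) (hmom z hz)
  rw [← hvw.pdt_eq, ← hvw.pdx_eq] at htransport
  rw [energy_balance hγ.ne' hρ1 hu1 hv1 hρz (hmass z hz)]
  rw [pdx_rpow_const hρ1 (.inl hρz.ne')] at htransport ⊢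
  linear_combination v z * htransport - γ * ρ z ^ (γ - 1) * pdx ρ z * hv z
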